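/- arXiv:1311.0056 — 4 statements merged into one kernel-verified Lean document; each statement's English description precedes it below -/
import Mathlib

section
/- Let P : ℤ^9 → ℤ^9 be the permutation fixing the first coordinate d and cyclically permuting (m₁, ..., m₈) by m₁ ↦ m₈, mᵢ ↦ m_{i-1} for i ≥ 2 (i.e. (d, m₁, ..., m₈) ↦ (d, m₂, m₃, m₄, m₅, m₆, m₇, m₈, m₁)), and let M be the Cremona action as above. Set M_σ = P ∘ M. Then the characteristic polynomial of M_σ (as a 9×9 integer matrix) has 1 as a root with algebraic multiplicity at least 3. -/
open Matrix

/-- The Cremona action on `(d, m₁, …, m₈)` centered at the first four points,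
as a 9×9 integer matrix in the basis `(H, E₁, …, E₈)`. -/
def Cremona : Matrix (Fin 9) (Fin 9) ℤ :=
  !![3,-1,-1,-1,-1,0,0,0,0;
     2, 0,-1,-1,-1,0,0,0,0;
     2,-1, 0,-1,-1,0,0,0,0;
     2,-1,-1, 0,-1,0,0,0,0;
     2,-1,-1,-1, 0,0,0,0,0;
     0, 0, 0, 0, 0,1,0,0,0;
     0, 0, 0, 0, 0,0,1,0,0;
     0, 0, 0, 0, 0,0,0,1,0;
     0, 0, 0, 0, 0,0,0,0,1]

/-- The permutation `(d, m₁, …, m₈) ↦ (d, m₂, …, m₈, m₁)`. -/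
def CyclicShift : Matrix (Fin 9) (Fin 9) ℤ :=
  !![1,0,0,0,0,0,0,0,0;
     0,0,1,0,0,0,0,0,0;
     0,0,0,1,0,0,0,0,0;
     0,0,0,0,1,0,0,0,0;
     0,0,0,0,0,1,0,0,0;
     0,0,0,0,0,0,1,0,0;
     0,0,0,0,0,0,0,1,0;
     0,0,0,0,0,0,0,0,1;
     0,1,0,0,0,0,0,0,0]

/-- The Coxeter element `M_σ = P ∘ M`. -/
def Msigma : Matrix (Fin 9) (Fin 9) ℤ := CyclicShift * Cremona

/-!
`M_σ` has a Jordan chain `v₁, v₂, v₃` for the eigenvalue `1` (`M_σ v₁ = v₁`, `M_σ v₂ = v₂ + v₁`,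
`M_σ v₃ = v₃ + v₂`) that extends to a `ℤ`-basis of `ℤ⁹`. In that basis `M_σ` is block upper
triangular, its upper-left block being the unipotent `3 × 3` Jordan block, whose characteristic
polynomial `(X - 1)³` therefore divides that of `M_σ`.
-/

namespace Matrix

variable {R : Type*} [CommRing R]

theorem charpoly_conj_of_mul_eq_one {n : Type*} [Fintype n] [DecidableEq n]
    (M P Q : Matrix n n R) (hPQ : P * Q = 1) : (Q * M * P).charpoly = M.charpoly := by
  rw [charpoly_mul_comm, ← Matrix.mul_assoc, hPQ, Matrix.one_mul]

theorem charpoly_toBlocks₁₁_dvd {m n : Type*} [Fintype m] [DecidableEq m] [Fintype n]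
    [DecidableEq n] (N : Matrix (m ⊕ n) (m ⊕ n) R) (h : N.toBlocks₂₁ = 0) :
    N.toBlocks₁₁.charpoly ∣ N.charpoly := by
  rw [← fromBlocks_toBlocks N, h, charpoly_fromBlocks_zero₂₁, toBlocks_fromBlocks₁₁]
  exact dvd_mul_right _ _

open Polynomial in
theorem charpoly_eq_pow_of_isUpperTriangular {n : Type*} [Fintype n] [DecidableEq n]
    [LinearOrder n] (M : Matrix n n R) (hM : M.IsUpperTriangular) {c : R}
    (hc : ∀ i, M i i = c) : M.charpoly = (X - C c) ^ Fintype.card n := by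
  simp [charpoly_of_isUpperTriangular M hM, hc]

end Matrix

namespace Msigma

/-- Columns: the Jordan chain `v₁, v₂, v₃`, then the standard vectors `e₀, …, e₅`. -/
def jordanBasis : Matrix (Fin 9) (Fin 9) ℤ :=
  !![2,-4,13,1,0,0,0,0,0;
     1,-1, 4,0,1,0,0,0,0;
     1,-2, 7,0,0,1,0,0,0;
     1,-3, 9,0,0,0,1,0,0;
     1,-4,10,0,0,0,0,1,0;
     1,-3, 6,0,0,0,0,0,1;
     1,-2, 3,0,0,0,0,0,0;
     1,-1, 1,0,0,0,0,0,0;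
     1, 0, 0,0,0,0,0,0,0]

def jordanBasisInv : Matrix (Fin 9) (Fin 9) ℤ :=
  !![0,0,0,0,0,0, 0, 0, 1;
     0,0,0,0,0,0, 1,-3, 2;
     0,0,0,0,0,0, 1,-2, 1;
     1,0,0,0,0,0,-9,14,-7;
     0,1,0,0,0,0,-3, 5,-3;
     0,0,1,0,0,0,-5, 8,-4;
     0,0,0,1,0,0,-6, 9,-4;
     0,0,0,0,1,0,-6, 8,-3;
     0,0,0,0,0,1,-3, 3,-1]

theorem jordanBasis_mul_jordanBasisInv : jordanBasis * jordanBasisInv = 1 := by decide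

def inJordanBasis : Matrix (Fin 3 ⊕ Fin 6) (Fin 3 ⊕ Fin 6) ℤ :=
  reindex finSumFinEquiv.symm finSumFinEquiv.symm (jordanBasisInv * Msigma * jordanBasis)

theorem inJordanBasis_toBlocks₂₁ : inJordanBasis.toBlocks₂₁ = 0 := by decide

theorem inJordanBasis_toBlocks₁₁ : inJordanBasis.toBlocks₁₁ = !![1,1,0; 0,1,1; 0,0,1] := by
  decide

theorem charpoly_inJordanBasis : inJordanBasis.charpoly = Msigma.charpoly := by
  rw [inJordanBasis, charpoly_reindex,
    charpoly_conj_of_mul_eq_one _ _ _ jordanBasis_mul_jordanBasisInv]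

end Msigma

open Polynomial in
/-- the characteristic polynomial of `M_σ` has `1` as a root of
algebraic multiplicity at least `3`. -/
theorem msigma_charpoly_one_multiplicity : (X - C 1) ^ 3 ∣ Msigma.charpoly := by
  have hblock : Msigma.inJordanBasis.toBlocks₁₁.charpoly = (X - C 1) ^ 3 := by
    rw [Msigma.inJordanBasis_toBlocks₁₁,
      charpoly_eq_pow_of_isUpperTriangular _ (by decide) (c := 1) (by decide), Fintype.card_fin]
  rw [← Msigma.charpoly_inJordanBasis, ← hblock]
  exact charpoly_toBlocks₁₁_dvd _ Msigma.inJordanBasis_toBlocks₂₁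
end

section
/- Let M_σ : ℤ^9 → ℤ^9 be as above and let v = (1, 0, 0, 0, 0, -1, -1, -1, -1) (the class H - E₅ - E₆ - E₇ - E₈). Then the vectors M_σⁿ(v), n ∈ ℕ, are pairwise distinct; in particular for all m ≠ n, M_σᵐ(v) ≠ M_σⁿ(v). -/
open Matrix

/-- The class `H - E₅ - E₆ - E₇ - E₈`. -/
def rootClass : Fin 9 → ℤ := ![1, 0, 0, 0, 0, -1, -1, -1, -1]

/-!
The degree `dₙ` (the `H`-coordinate of `M_σⁿ v`) satisfies `dₙ₊₁ = dₙ + b · M_σⁿ v` with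
`b = (2, -1, -1, -1, -1, 0, 0, 0, 0)`. The covector `κ = (-4, 1, …, 1)` is fixed by `M_σ`, so
`κ · M_σⁿ v = κ · v = -8`, and `b M_σ⁶ = b - κ`; hence the increment `b · M_σⁿ v` grows by `8`
every six steps. It is positive for `n < 6`, so it is always positive, the degree is strictly
increasing, and the orbit is injective.
-/

theorem Matrix.vecMul_pow_of_vecMul_eq_self {ι R : Type*} [Fintype ι] [DecidableEq ι]
    [Semiring R] {A : Matrix ι ι R} {u : ι → R} (hu : u ᵥ* A = u) (n : ℕ) :
    u ᵥ* (A ^ n) = u := by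
  induction n with
  | zero => simp
  | succ n ih => rw [pow_succ, ← vecMul_vecMul, ih, hu]

theorem lt_apply_of_forall_lt_of_le_apply_add {α : Type*} [Preorder α] {a : α} {f : ℕ → α}
    {p : ℕ} (hp : 0 < p) (hbase : ∀ k < p, a < f k) (hstep : ∀ n, f n ≤ f (n + p)) (n : ℕ) :
    a < f n := by
  induction n using Nat.strong_induction_on with
  | _ n ih =>
    rcases lt_or_ge n p with hn | hn
    · exact hbase n hn
    · obtain ⟨k, rfl⟩ := Nat.exists_eq_add_of_le' hn
      exact (ih k (by omega)).trans_le (hstep k)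

def invariantForm : Fin 9 → ℤ := ![-4, 1, 1, 1, 1, 1, 1, 1, 1]

def degreeForm : Fin 9 → ℤ := Pi.single 0 1

def degreeStep : Fin 9 → ℤ := ![2, -1, -1, -1, -1, 0, 0, 0, 0]

def orbit (n : ℕ) : Fin 9 → ℤ := (Msigma ^ n) *ᵥ rootClass

theorem invariantForm_vecMul_Msigma : invariantForm ᵥ* Msigma = invariantForm := by decide

theorem degreeForm_vecMul_Msigma : degreeForm ᵥ* Msigma = degreeForm + degreeStep := by decide

theorem degreeStep_vecMul_Msigma_pow_six :
    degreeStep ᵥ* (Msigma ^ 6) = degreeStep - invariantForm := by decide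

theorem invariantForm_dotProduct_orbit (n : ℕ) : invariantForm ⬝ᵥ orbit n = -8 := by
  rw [orbit, dotProduct_mulVec, vecMul_pow_of_vecMul_eq_self invariantForm_vecMul_Msigma]
  decide

theorem degreeStep_dotProduct_orbit_pos (n : ℕ) : 0 < degreeStep ⬝ᵥ orbit n := by
  refine lt_apply_of_forall_lt_of_le_apply_add (f := fun k => degreeStep ⬝ᵥ orbit k) (p := 6)
    (by norm_num) (by decide) (fun k => ?_) n
  have hshift : orbit (k + 6) = (Msigma ^ 6) *ᵥ orbit k := by
    rw [orbit, orbit, add_comm, pow_add, ← mulVec_mulVec]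
  rw [hshift, dotProduct_mulVec, degreeStep_vecMul_Msigma_pow_six, sub_dotProduct,
    invariantForm_dotProduct_orbit]
  omega

theorem strictMono_degreeForm_dotProduct_orbit : StrictMono fun n => degreeForm ⬝ᵥ orbit n := by
  refine strictMono_nat_of_lt_succ fun n => ?_
  have hsucc : orbit (n + 1) = Msigma *ᵥ orbit n := by
    rw [orbit, orbit, pow_succ', mulVec_mulVec]
  simp only [hsucc, dotProduct_mulVec, degreeForm_vecMul_Msigma, add_dotProduct]
  linarith [degreeStep_dotProduct_orbit_pos n]

/-- the vectors `M_σⁿ(v)`, `n ∈ ℕ`, are pairwise distinct, where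
`v = H - E₅ - E₆ - E₇ - E₈`. -/
theorem msigma_orbit_pairwise_distinct :
    ∀ m n : ℕ, m ≠ n → (Msigma ^ m).mulVec rootClass ≠ (Msigma ^ n).mulVec rootClass :=
  fun _ _ hmn h => hmn (strictMono_degreeForm_dotProduct_orbit.injective (congrArg _ h))
end

section
/- Let M_σ : ℤ^9 → ℤ^9 be as above and v = (1, 0, 0, 0, 0, -1, -1, -1, -1). Then the first coordinate (the degree d) of M_σⁿ(v) is unbounded as n → ∞; i.e. for every N there exists n with (M_σⁿ v)₁ > N. -/
/-!
On the span of `v`, `u = M_σ⁶ v - v` and the `M_σ`-fixed class `w = (2, 1, …, 1)`, the matrix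
`T = M_σ⁶` is unipotent: `T v = v + u`, `T u = u + 24 w`, `T w = w`. Hence
`Tᵏ v = v + k u + 24 (k choose 2) w`, whose degree `1 + 22 k + 48 (k choose 2)` grows quadratically.
-/

open Matrix

theorem Matrix.pow_mulVec_eq_add_nsmul_add_choose_two_nsmul {n R : Type*} [Fintype n]
    [DecidableEq n] [Semiring R] {A : Matrix n n R} {v u c : n → R}
    (hv : A *ᵥ v = v + u) (hu : A *ᵥ u = u + c) (hc : A *ᵥ c = c) (k : ℕ) :
    (A ^ k) *ᵥ v = v + k • u + k.choose 2 • c := by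
  induction k with
  | zero => simp
  | succ k ih =>
    rw [pow_succ', ← mulVec_mulVec, ih, mulVec_add, mulVec_add, mulVec_smul, mulVec_smul,
      hv, hu, hc, Nat.choose_succ_succ', Nat.choose_one_right]
    module

def invariantClass : Fin 9 → ℤ := ![2, 1, 1, 1, 1, 1, 1, 1, 1]

def rootClassDrift : Fin 9 → ℤ := ![22, 15, 11, 7, 3, 7, 11, 15, 19]

theorem Msigma_pow_six_mulVec_rootClass :
    (Msigma ^ 6) *ᵥ rootClass = rootClass + rootClassDrift := by
  decide

theorem Msigma_pow_six_mulVec_rootClassDrift :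
    (Msigma ^ 6) *ᵥ rootClassDrift = rootClassDrift + 24 • invariantClass := by
  decide

theorem Msigma_pow_six_mulVec_smul_invariantClass :
    (Msigma ^ 6) *ᵥ (24 • invariantClass) = 24 • invariantClass := by
  decide

theorem Msigma_pow_six_mul_mulVec_rootClass_zero (k : ℕ) :
    ((Msigma ^ (6 * k)) *ᵥ rootClass) 0 = 1 + 22 * k + 48 * k.choose 2 := by
  rw [pow_mul, pow_mulVec_eq_add_nsmul_add_choose_two_nsmul Msigma_pow_six_mulVec_rootClass
    Msigma_pow_six_mulVec_rootClassDrift Msigma_pow_six_mulVec_smul_invariantClass]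
  simp [rootClass, rootClassDrift, invariantClass, mul_comm]

/-- the degree (first coordinate) of `M_σⁿ(v)` is unbounded in `n`. -/
theorem msigma_orbit_degree_unbounded :
    ∀ N : ℤ, ∃ n : ℕ, ((Msigma ^ n).mulVec rootClass) 0 > N := by
  intro N
  refine ⟨6 * N.toNat, ?_⟩
  rw [Msigma_pow_six_mul_mulVec_rootClass_zero]
  have hN := Int.self_le_toNat N
  have hchoose := Int.natCast_nonneg (N.toNat.choose 2)
  omega
end

section
/- Let M_σ be the 9×9 integer matrix as above. Then M_σ is not of finite order: for every n ≥ 1, M_σⁿ ≠ I. -/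
/-!
`M_σ` has a Jordan block of size two for the eigenvalue `1`: the row vector
`u = (-4, 1, …, 1)` is fixed by `M_σ`, and `w = (-8, 1, 2, 3, 4, 3, 2, 1, 0)` satisfies
`w M_σ = w + u`. Hence `w M_σⁿ = w + n u`, which differs from `w` for every `n ≥ 1`.
-/

open Matrix

section JordanBlock

variable {ι R : Type*} [Fintype ι] [DecidableEq ι] [Ring R] {M : Matrix ι ι R} {u w : ι → R}

theorem vecMul_pow_eq_add_nsmul (hu : u ᵥ* M = u) (hw : w ᵥ* M = w + u) (n : ℕ) :
    w ᵥ* M ^ n = w + n • u := by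
  induction n with
  | zero => simp
  | succ n ih =>
    rw [pow_succ, ← vecMul_vecMul, ih, add_vecMul, hw, smul_vecMul, hu, succ_nsmul]
    abel

theorem not_isOfFinOrder_of_vecMul_eq_add [IsAddTorsionFree R] (hu0 : u ≠ 0)
    (hu : u ᵥ* M = u) (hw : w ᵥ* M = w + u) : ¬IsOfFinOrder M := by
  rw [isOfFinOrder_iff_pow_eq_one]
  rintro ⟨n, hn, hMn⟩
  have hw_fixed : w + n • u = w := by
    rw [← vecMul_pow_eq_add_nsmul hu hw n, hMn, vecMul_one]
  rw [add_eq_left, nsmul_eq_zero_iff_left hu0] at hw_fixed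
  omega

end JordanBlock

/-- `M_σ` has infinite order: `M_σⁿ ≠ I` for every `n ≥ 1`. -/
theorem msigma_infinite_order : ∀ n : ℕ, 1 ≤ n → Msigma ^ n ≠ 1 := by
  intro n hn hMn
  have hu : ![-4, 1, 1, 1, 1, 1, 1, 1, 1] ᵥ* Msigma = ![-4, 1, 1, 1, 1, 1, 1, 1, 1] := by
    decide
  have hw : ![-8, 1, 2, 3, 4, 3, 2, 1, 0] ᵥ* Msigma =
      ![-8, 1, 2, 3, 4, 3, 2, 1, 0] + ![-4, 1, 1, 1, 1, 1, 1, 1, 1] := by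
    decide
  exact not_isOfFinOrder_of_vecMul_eq_add (by decide) hu hw
    (isOfFinOrder_iff_pow_eq_one.2 ⟨n, hn, hMn⟩)
end
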